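/- arXiv:1804.02548 — 2 statements merged into one kernel-verified Lean document; each statement's English description precedes it below -/
import Mathlib

section
/- Membership of a group in the class ℬ_f does not depend on the choice of finite generating set: if a finitely generated infinite Cayley automatic group G belongs to ℬ_f with respect to a finite generating set A, then G belongs to ℬ_f with respect to any other finite generating set A′ of G. -/
namespace CAG

/-- The convolution `w₁ ⊗ w₂` of two words, over the padded alphabet
`(Σ ∪ {⋄})²`, modelled as `Option α × Option α` where `none` is the padding symbol `⋄`. -/
def conv {α : Type*} : List α → List α → List (Option α × Option α)
  | [], [] => []
  | a :: as, [] => (some a, none) :: conv as []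
  | [], b :: bs => (none, some b) :: conv [] bs
  | a :: as, b :: bs => (some a, some b) :: conv as bs

/-- A binary relation on words is regular if the language of convolutions of its pairs
is a regular language. -/
def IsRegularRel {α : Type*} (R : Set (List α × List α)) : Prop :=
  Language.IsRegular {w | ∃ p ∈ R, w = conv p.1 p.2}

variable {G : Type*} [Group G]

/-- The alphabet `S = A ∪ A⁻¹` associated to a generating set `A ⊆ G`. -/
def Alph (A : Set G) : Type _ := {x : G // x ∈ A ∪ A⁻¹}

/-- The canonical evaluation map `π : S* → G`. -/
def eval (A : Set G) (w : List (Alph A)) : G := (w.map Subtype.val).prod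

/-- The word length `d_A(g)` of `g` with respect to the generating set `A`. -/
noncomputable def wordLength (A : Set G) (g : G) : ℕ :=
  sInf {n | ∃ w : List (Alph A), eval A w = g ∧ w.length = n}

/-- The distance `d_A(g₁, g₂)` in the Cayley graph of `G` with respect to `A`. -/
noncomputable def cayleyDist (A : Set G) (g₁ g₂ : G) : ℕ := wordLength A (g₁⁻¹ * g₂)

/-- `ψ : L → G` is a Cayley automatic representation of `G` (w.r.t. the
generating set `A`): `L ⊆ S*` is regular, `ψ` is a bijection from `L` onto `G`, and for every
`a ∈ A` the relation `R_a = {(ψ⁻¹(g), ψ⁻¹(g·a)) : g ∈ G}` is regular. -/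
def IsCayleyAutomaticRep (A : Set G) (L : Language (Alph A)) (ψ : List (Alph A) → G) : Prop :=
  Language.IsRegular L ∧ Set.BijOn ψ L Set.univ ∧
    ∀ a ∈ A, IsRegularRel {p : List (Alph A) × List (Alph A) |
      p.1 ∈ L ∧ p.2 ∈ L ∧ ψ p.2 = ψ p.1 * a}

/-- `G` is Cayley automatic with respect to the generating set `A`. -/
def IsCayleyAutomatic (A : Set G) : Prop :=
  ∃ (L : Language (Alph A)) (ψ : List (Alph A) → G), IsCayleyAutomaticRep A L ψ

/-- `G` is automatic (in the sense of Thurston) with respect to the generating set `A`: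
there is a regular language `L ⊆ S*` on which the canonical evaluation map `π` is a bijection
onto `G` and all the relations `R_a`, `a ∈ A`, are regular. -/
def IsAutomatic (A : Set G) : Prop :=
  ∃ L : Language (Alph A), IsCayleyAutomaticRep A L (eval A)

/-- The family `𝔉` of non-decreasing, non-negative real valued functions defined on a
final segment `[Q, ∞)` of `ℕ` (values below `Q` are irrelevant junk values). -/
structure FFun where
  Q : ℕ
  toFun : ℕ → ℝ
  nonneg : ∀ n, Q ≤ n → 0 ≤ toFun n
  mono : ∀ m n, Q ≤ m → m ≤ n → toFun m ≤ toFun n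

/-- `h ⪯ f` : there are positive integers `K, M, N`, with `[N,∞)` contained in the domains of
`h` and `f`, such that `h(n) ≤ K·f(M·n)` for all `n ≥ N`. -/
def FFun.Preceq (h f : FFun) : Prop :=
  ∃ K M N : ℕ, 0 < K ∧ 0 < M ∧ 0 < N ∧ h.Q ≤ N ∧ f.Q ≤ N ∧
    ∀ n, N ≤ n → h.toFun n ≤ K * f.toFun (M * n)

/-- `h ≍ f` iff `h ⪯ f` and `f ⪯ h`. -/
def FFun.Equiv (h f : FFun) : Prop := h.Preceq f ∧ f.Preceq h

/-- `h ≺ f` iff `h ⪯ f` and not `h ≍ f`. -/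
def FFun.Prec (h f : FFun) : Prop := h.Preceq f ∧ ¬ h.Equiv f

/-- `G ∈ ℬ_f` with respect to the generating set `A`: there is a Cayley automatic
representation `ψ : L → G` such that the function
`h(n) = max{d_A(π(w), ψ(w)) : w ∈ L, |w| ≤ n}` satisfies `h ⪯ f`
(stated equivalently: for some positive `K, M, N` with `N ≥ Q_f`, every `w ∈ L` with `|w| ≤ n`
and `n ≥ N` satisfies `d_A(π(w), ψ(w)) ≤ K·f(M·n)`). -/
def InB (A : Set G) (f : FFun) : Prop :=
  ∃ (L : Language (Alph A)) (ψ : List (Alph A) → G),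
    IsCayleyAutomaticRep A L ψ ∧
    ∃ K M N : ℕ, 0 < K ∧ 0 < M ∧ 0 < N ∧ f.Q ≤ N ∧
      ∀ n, N ≤ n → ∀ w ∈ L, w.length ≤ n →
        (cayleyDist A (eval A w) (ψ w) : ℝ) ≤ K * f.toFun (M * n)

/-- The identity function `𝔦(n) = n` as an element of `𝔉`. -/
def identF : FFun where
  Q := 1
  toFun n := n
  nonneg n _ := by positivity
  mono m n _ h := by simpa using (Nat.cast_le (α := ℝ)).mpr h

/-- The exponential function `𝔢(n) = exp n` as an element of `𝔉`. -/
noncomputable def expF : FFun where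
  Q := 1
  toFun n := Real.exp n
  nonneg n _ := (Real.exp_pos n).le
  mono m n _ h := Real.exp_le_exp.mpr (by exact_mod_cast h)

end CAG


/-!
Encode each letter `s` of `A ∪ A⁻¹` by a block of one fixed length over `A' ∪ A'⁻¹` that spells
`x^b s x^(-b')` for a fixed letter `x` and carry bits `b, b'`: the carry absorbs the parity
obstruction to spelling every letter by a word of exactly that length, and a final `x^b` closes
the word. The resulting encoding `E` preserves evaluation, is computed by a finite transducer and,
all blocks having the same length, maps regular relations to regular relations. The relations
`R_g` are regular for every `g` (they are closed under composition and inversion), so `ψ ∘ E⁻¹`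
on `E '' L` is a Cayley automatic representation over `A'`, and its distance function is at most
`C` times the old one, where `C` bounds the `A'`-length of the letters of `A`.
-/

theorem DFA.isRegular_accepts {α σ : Type*} [Finite σ] (M : DFA α σ) : M.accepts.IsRegular :=
  Language.isRegular_iff.mpr ⟨σ, Fintype.ofFinite σ, M, rfl⟩

theorem Language.IsRegular.preimage_filterMap {α β : Type*} {L : Language α} (hL : L.IsRegular)
    (f : β → Option α) : Language.IsRegular (List.filterMap f ⁻¹' L : Language β) := by
  obtain ⟨σ, _, M, rfl⟩ := hL
  let M' : DFA β σ := ⟨fun q b => (f b).elim q (M.step q), M.start, M.accept⟩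
  have hrun : ∀ q x, M'.evalFrom q x = M.evalFrom q (x.filterMap f) := by
    intro q x
    induction x generalizing q with
    | nil => rfl
    | cons b x ih => cases hb : f b <;> simp [M', DFA.evalFrom_cons, hb, ih]
  exact ⟨σ, inferInstance, M',
    Set.ext fun x => iff_of_eq (congrArg (· ∈ M.accept) (hrun M.start x))⟩

theorem Language.IsRegular.preimage_map {α β : Type*} {L : Language α} (hL : L.IsRegular)
    (f : β → α) : Language.IsRegular (List.map f ⁻¹' L : Language β) := by
  simpa only [List.filterMap_eq_map] using hL.preimage_filterMap (some ∘ f)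

namespace CAG

section Convolution

variable {α : Type*}

@[simp] lemma conv_nil_nil : conv ([] : List α) [] = [] := by rw [conv]

@[simp] lemma conv_cons_cons (a b : α) (u v : List α) :
    conv (a :: u) (b :: v) = (some a, some b) :: conv u v := by rw [conv]

@[simp] lemma conv_cons_nil (a : α) (u : List α) :
    conv (a :: u) [] = (some a, none) :: conv u [] := by rw [conv]

@[simp] lemma conv_nil_cons (b : α) (v : List α) :
    conv [] (b :: v) = (none, some b) :: conv [] v := by rw [conv]

lemma conv_nil_left (v : List α) : conv [] v = v.map fun b => (none, some b) := by
  induction v with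
  | nil => simp
  | cons b v ih => simp [ih]

lemma conv_nil_right (u : List α) : conv u [] = u.map fun a => (some a, none) := by
  induction u with
  | nil => simp
  | cons a u ih => simp [ih]

lemma conv_append {u₁ v₁ : List α} (h : u₁.length = v₁.length) (u₂ v₂ : List α) :
    conv (u₁ ++ u₂) (v₁ ++ v₂) = conv u₁ v₁ ++ conv u₂ v₂ := by
  induction u₁ generalizing v₁ with
  | nil => rw [List.eq_nil_of_length_eq_zero h.symm]; simp
  | cons a u₁ ih =>
    obtain _ | ⟨b, v₁⟩ := v₁
    · simp at h
    · simp [ih (Nat.succ.inj h)]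

lemma conv_append_right_of_length_le {u v : List α} (h : u.length ≤ v.length) (w : List α) :
    conv u (v ++ w) = conv u v ++ conv [] w := by
  induction u generalizing v with
  | nil => simp [conv_nil_left]
  | cons a u ih =>
    obtain _ | ⟨b, v⟩ := v
    · simp at h
    · simp [ih (Nat.le_of_succ_le_succ h)]

lemma conv_append_left_of_length_le {u v : List α} (h : v.length ≤ u.length) (w : List α) :
    conv (u ++ w) v = conv u v ++ conv w [] := by
  induction v generalizing u with
  | nil => simp [conv_nil_right]
  | cons b v ih =>
    obtain _ | ⟨a, u⟩ := u
    · simp at h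
    · simp [ih (Nat.le_of_succ_le_succ h)]

lemma filterMap_fst_conv (u v : List α) : (conv u v).filterMap Prod.fst = u := by
  induction u generalizing v with
  | nil => simp [conv_nil_left]
  | cons a u ih => cases v <;> simp [ih]

lemma filterMap_snd_conv (u v : List α) : (conv u v).filterMap Prod.snd = v := by
  induction v generalizing u with
  | nil => simp [conv_nil_right]
  | cons b v ih => cases u <;> simp [ih]

lemma conv_inj {u v u' v' : List α} : conv u v = conv u' v' ↔ u = u' ∧ v = v' :=
  ⟨fun h => ⟨by rw [← filterMap_fst_conv u v, h, filterMap_fst_conv],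
    by rw [← filterMap_snd_conv u v, h, filterMap_snd_conv]⟩, fun h => h.1 ▸ h.2 ▸ rfl⟩

lemma map_swap_conv (u v : List α) : (conv u v).map Prod.swap = conv v u := by
  induction u generalizing v with
  | nil => simp [conv_nil_left, conv_nil_right]
  | cons a u ih => cases v <;> simp [ih, conv_nil_left, conv_nil_right]

lemma conv_self (u : List α) : conv u u = u.map fun a => (some a, some a) := by
  induction u with
  | nil => simp
  | cons a u ih => simp [ih]

end Convolution

structure Transducer (α β τ : Type*) where
  step : τ → α → τ
  out : τ → α → List β
  final : τ → List β

namespace Transducer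

variable {α β τ : Type*} (T : Transducer α β τ)

def run : τ → List α → List β
  | t, [] => T.final t
  | t, a :: w => T.out t a ++ run (T.step t a) w

@[simp] lemma run_nil (t : τ) : T.run t [] = T.final t := rfl

@[simp] lemma run_cons (t : τ) (a : α) (w : List α) :
    T.run t (a :: w) = T.out t a ++ T.run (T.step t a) w := rfl

lemma length_le_length_run (hout : ∀ t a, T.out t a ≠ []) (t : τ) (u : List α) :
    u.length ≤ (T.run t u).length := by
  induction u generalizing t with
  | nil => exact Nat.zero_le _
  | cons a u ih =>
    have := List.length_pos_of_ne_nil (hout t a)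
    simp only [List.length_cons, run_cons, List.length_append]
    linarith [ih (T.step t a)]

theorem run_injective {ℓ : ℕ} (hout : ∀ t a, (T.out t a).length = ℓ)
    (hfinal : ∀ t, (T.final t).length < ℓ) (hinj : ∀ t, Function.Injective (T.out t)) (t : τ) :
    Function.Injective (T.run t) := by
  have short_of_nil (t a u) : (T.run t []).length < (T.run t (a :: u)).length := by
    simp only [run_nil, run_cons, List.length_append, hout]
    exact (hfinal t).trans_le (Nat.le_add_right _ _)
  intro u v huv
  induction u generalizing v t with
  | nil =>
    cases v with
    | nil => rfl
    | cons b v => exact absurd (congrArg List.length huv) (short_of_nil t b v).ne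
  | cons a u ih =>
    cases v with
    | nil => exact absurd (congrArg List.length huv) (short_of_nil t a u).ne'
    | cons b v =>
      obtain ⟨hab, huv⟩ := List.append_inj huv ((hout t a).trans (hout t b).symm)
      obtain rfl := hinj t hab
      rw [ih (T.step t a) huv]

section Image

variable {σ : Type*} (M : DFA α σ) (t₀ : τ) (B : ℕ)

/-- ε-moves guess the next input letter read by `M` (or the end of the input) and load its output
into a buffer of length at most `B`, which letter moves drain. -/
def imageεNFA : εNFA β (Option (σ × τ) × {l : List β // l.length ≤ B}) where
  step s c := {s' |
    (c = none ∧ s.2.1 = [] ∧ ∃ q t a, s.1 = some (q, t) ∧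
      s'.1 = some (M.step q a, T.step t a) ∧ s'.2.1 = T.out t a) ∨
    (c = none ∧ s.2.1 = [] ∧ ∃ q t, s.1 = some (q, t) ∧ q ∈ M.accept ∧
      s'.1 = none ∧ s'.2.1 = T.final t) ∨
    (∃ b, c = some b ∧ s'.1 = s.1 ∧ s.2.1 = b :: s'.2.1)}
  start := {s | s.1 = some (M.start, t₀) ∧ s.2.1 = []}
  accept := {s | s.1 = none ∧ s.2.1 = []}

variable {M t₀ B}

lemma imageεNFA_drain (s : Option (σ × τ) × {l : List β // l.length ≤ B}) :
    ∃ e, e.1 = s.1 ∧ e.2.1 = [] ∧ (T.imageεNFA M t₀ B).IsPath s e (s.2.1.map some) := by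
  obtain ⟨p, l, hl⟩ := s
  induction l with
  | nil => exact ⟨_, rfl, rfl, .nil _⟩
  | cons b l ih =>
    obtain ⟨e, he₁, he₂, hpath⟩ := ih (Nat.le_of_succ_le hl)
    exact ⟨e, he₁, he₂, .cons (p, ⟨l, _⟩) _ _ _ _ (Or.inr (Or.inr ⟨b, rfl, rfl, rfl⟩)) hpath⟩

lemma imageεNFA_complete (hout : ∀ t a, (T.out t a).length ≤ B)
    (hfinal : ∀ t, (T.final t).length ≤ B) (u : List α)
    (s : Option (σ × τ) × {l : List β // l.length ≤ B}) (q : σ) (t : τ) (hs : s.1 = some (q, t))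
    (hbuf : s.2.1 = []) (hq : M.evalFrom q u ∈ M.accept) :
    ∃ e ∈ (T.imageεNFA M t₀ B).accept, ∃ x, x.reduceOption = T.run t u ∧
      (T.imageεNFA M t₀ B).IsPath s e x := by
  induction u generalizing s q t with
  | nil =>
    let s' : Option (σ × τ) × {l : List β // l.length ≤ B} := (none, ⟨_, hfinal t⟩)
    obtain ⟨e, he₁, he₂, hpath⟩ := T.imageεNFA_drain (M := M) (t₀ := t₀) s'
    refine ⟨e, ⟨he₁, he₂⟩, none :: (T.final t).map some, by simp [List.reduceOption], ?_⟩
    exact .cons s' _ _ _ _ (Or.inr (Or.inl ⟨rfl, hbuf, q, t, hs, hq, rfl, rfl⟩)) hpath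
  | cons a u ih =>
    let s' : Option (σ × τ) × {l : List β // l.length ≤ B} :=
      (some (M.step q a, T.step t a), ⟨_, hout t a⟩)
    obtain ⟨e, he₁, he₂, hpath⟩ := T.imageεNFA_drain (M := M) (t₀ := t₀) s'
    obtain ⟨f, hf, x, hx, hpath'⟩ := ih e _ _ he₁ he₂ hq
    refine ⟨f, hf, none :: ((T.out t a).map some ++ x), by simp [List.reduceOption, ← hx], ?_⟩
    refine .cons s' _ _ _ _ (Or.inl ⟨rfl, hbuf, q, t, a, hs, rfl, rfl⟩) ?_
    exact (εNFA.isPath_append _).mpr ⟨e, hpath, hpath'⟩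

lemma imageεNFA_sound {s e : Option (σ × τ) × {l : List β // l.length ≤ B}} {x : List (Option β)}
    (hpath : (T.imageεNFA M t₀ B).IsPath s e x) (he : e ∈ (T.imageεNFA M t₀ B).accept) :
    (∀ q t, s.1 = some (q, t) →
      ∃ u, M.evalFrom q u ∈ M.accept ∧ x.reduceOption = s.2.1 ++ T.run t u) ∧
    (s.1 = none → x.reduceOption = s.2.1) := by
  induction hpath with
  | nil s =>
    refine ⟨fun q t hs => ?_, fun _ => by simp [he.2]⟩
    simp [he.1] at hs
  | cons s' s e c x hstep _ ih =>
    obtain ⟨ih₁, ih₂⟩ := ih he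
    rcases hstep with ⟨rfl, hbuf, q, t, a, hs, hs'₁, hs'₂⟩ | ⟨rfl, hbuf, q, t, hs, hq, hs'₁, hs'₂⟩ |
      ⟨b, rfl, hs'₁, hbuf⟩
    · obtain ⟨u, hu, hx⟩ := ih₁ _ _ hs'₁
      refine ⟨fun q' t' hs₂ => ?_, fun h => by simp [hs] at h⟩
      rw [hs, Option.some.injEq, Prod.mk.injEq] at hs₂
      obtain ⟨rfl, rfl⟩ := hs₂
      exact ⟨a :: u, hu, by simp [List.reduceOption_cons_of_none, hx, hs'₂, hbuf]⟩
    · refine ⟨fun q' t' hs₂ => ?_, fun h => by simp [hs] at h⟩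
      rw [hs, Option.some.injEq, Prod.mk.injEq] at hs₂
      obtain ⟨rfl, rfl⟩ := hs₂
      exact ⟨[], hq, by simp [List.reduceOption_cons_of_none, ih₂ hs'₁, hs'₂, hbuf]⟩
    · refine ⟨fun q t hs => ?_, fun hs => ?_⟩
      · obtain ⟨u, hu, hx⟩ := ih₁ q t (hs'₁.trans hs)
        exact ⟨u, hu, by simp [List.reduceOption_cons_of_some, hx, hbuf]⟩
      · simp [List.reduceOption_cons_of_some, ih₂ (hs'₁.trans hs), hbuf]

lemma accepts_imageεNFA (hout : ∀ t a, (T.out t a).length ≤ B)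
    (hfinal : ∀ t, (T.final t).length ≤ B) :
    (T.imageεNFA M t₀ B).accepts = T.run t₀ '' M.accepts := by
  ext y
  rw [εNFA.mem_accepts_iff_exists_path]
  constructor
  · rintro ⟨s, e, x, ⟨hs₁, hs₂⟩, he, rfl, hpath⟩
    obtain ⟨u, hu, hx⟩ := (T.imageεNFA_sound hpath he).1 _ _ hs₁
    exact ⟨u, hu, by simp [hx, hs₂]⟩
  · rintro ⟨u, hu, rfl⟩
    obtain ⟨e, he, x, hx, hpath⟩ := T.imageεNFA_complete hout hfinal u
      (some (M.start, t₀), ⟨[], Nat.zero_le _⟩) _ _ rfl rfl hu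
    exact ⟨_, e, x, ⟨rfl, rfl⟩, he, hx, hpath⟩

end Image

theorem isRegular_image_run [Finite α] [Finite β] [Finite τ] (t₀ : τ) {L : Language α}
    (hL : L.IsRegular) : Language.IsRegular (T.run t₀ '' L : Language β) := by
  obtain ⟨σ, _, M, rfl⟩ := hL
  obtain ⟨B, hB⟩ := (Set.finite_range fun p : (τ × α) ⊕ τ =>
    (p.elim (fun p => T.out p.1 p.2) T.final).length).bddAbove
  have : Finite {l : List β // l.length ≤ B} := (List.finite_length_le β B).to_subtype
  rw [← T.accepts_imageεNFA (fun t a => hB ⟨.inl (t, a), rfl⟩) (fun t => hB ⟨.inr t, rfl⟩),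
    ← εNFA.toNFA_correct, ← NFA.toDFA_correct]
  exact DFA.isRegular_accepts _

def sideStep : Option τ → Option α → Option τ × List β
  | some t, some a => (some (T.step t a), T.out t a)
  | some t, none => (none, T.final t)
  | none, _ => (none, [])

def sideFinal : Option τ → List β
  | some t => T.final t
  | none => []

/-- Two copies of `T` running in lockstep on the two tracks of a convolution. -/
def pair : Transducer (Option α × Option α) (Option β × Option β) (Option τ × Option τ) where
  step c x := ((T.sideStep c.1 x.1).1, (T.sideStep c.2 x.2).1)
  out c x := conv (T.sideStep c.1 x.1).2 (T.sideStep c.2 x.2).2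
  final c := conv (T.sideFinal c.1) (T.sideFinal c.2)

@[simp] lemma pair_step (c : Option τ × Option τ) (x : Option α × Option α) :
    T.pair.step c x = ((T.sideStep c.1 x.1).1, (T.sideStep c.2 x.2).1) := rfl

@[simp] lemma pair_out (c : Option τ × Option τ) (x : Option α × Option α) :
    T.pair.out c x = conv (T.sideStep c.1 x.1).2 (T.sideStep c.2 x.2).2 := rfl

@[simp] lemma pair_final (c : Option τ × Option τ) :
    T.pair.final c = conv (T.sideFinal c.1) (T.sideFinal c.2) := rfl

lemma pair_run_conv_nil (t : τ) (u : List α) :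
    T.pair.run (some t, none) (conv u []) = conv (T.run t u) [] := by
  induction u generalizing t with
  | nil => simp [sideFinal]
  | cons a u ih =>
    simp only [conv_cons_nil, run_cons, pair_out, pair_step, sideStep, ih]
    simp [conv_nil_right]

lemma pair_run_nil_conv (t : τ) (v : List α) :
    T.pair.run (none, some t) (conv [] v) = conv [] (T.run t v) := by
  induction v generalizing t with
  | nil => simp [sideFinal]
  | cons b v ih =>
    simp only [conv_nil_cons, run_cons, pair_out, pair_step, sideStep, ih]
    simp [conv_nil_left]

/-- Equal block lengths keep the two tracks aligned; a final output, at most one block long, is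
followed only by silence. -/
theorem pair_run_conv {ℓ : ℕ} (hout : ∀ t a, (T.out t a).length = ℓ)
    (hfinal : ∀ t, (T.final t).length ≤ ℓ) (u v : List α) (t₁ t₂ : τ) :
    T.pair.run (some t₁, some t₂) (conv u v) = conv (T.run t₁ u) (T.run t₂ v) := by
  induction u generalizing v t₁ t₂ with
  | nil =>
    cases v with
    | nil => simp [sideFinal]
    | cons b v =>
      simp [sideStep, pair_run_nil_conv,
        conv_append_right_of_length_le ((hfinal t₁).trans (hout t₂ b).ge)]
  | cons a u ih =>
    cases v with
    | nil =>
      simp [sideStep, pair_run_conv_nil,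
        conv_append_left_of_length_le ((hfinal t₂).trans (hout t₁ a).ge)]
    | cons b v =>
      simp [sideStep, ih, conv_append ((hout t₁ a).trans (hout t₂ b).symm)]

end Transducer

theorem _root_.Language.IsRegular.image_filterMap {α β : Type*} [Finite α] [Finite β]
    {L : Language α} (hL : L.IsRegular) (f : α → Option β) :
    Language.IsRegular (List.filterMap f '' L : Language β) := by
  let T : Transducer α β Unit := ⟨fun _ _ => (), fun _ a => (f a).toList, fun _ => []⟩
  have hT : T.run () = List.filterMap f := by
    funext x
    induction x with
    | nil => rfl
    | cons a x ih => cases hfa : f a <;> simp [T, hfa, ih]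
  simpa only [hT] using T.isRegular_image_run () hL

theorem _root_.Language.IsRegular.image_map {α β : Type*} [Finite α] [Finite β]
    {L : Language α} (hL : L.IsRegular) (f : α → β) :
    Language.IsRegular (List.map f '' L : Language β) := by
  simpa only [List.filterMap_eq_map] using hL.image_filterMap (some ∘ f)

section Padding

variable {α γ : Type*}

/-- The shape `u.map some ++ List.replicate k none` of one track of a convolution. -/
def IsPadded : List (Option α) → Prop
  | [] => True
  | some _ :: l => IsPadded l
  | none :: l => ∀ c ∈ l, c = none

lemma isPadded_of_forall_eq_none : ∀ {l : List (Option α)}, (∀ c ∈ l, c = none) → IsPadded l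
  | [], _ => trivial
  | c :: l, h => by
    rw [h c List.mem_cons_self]
    exact fun c hc => h c (List.mem_cons_of_mem _ hc)

lemma isPadded_map_some_append (u : List α) (k : ℕ) :
    IsPadded (u.map some ++ List.replicate k none) := by
  induction u with
  | nil => exact isPadded_of_forall_eq_none fun c hc => List.eq_of_mem_replicate hc
  | cons a u ih => exact ih

/-- States: `some false` while reading letters, `some true` while reading padding, `none` dead. -/
def paddedDFA : DFA (Option α) (Option Bool) where
  step
    | some false, some _ => some false
    | some _, none => some true
    | _, _ => none
  start := some false
  accept := {s | s.isSome}

lemma paddedDFA_evalFrom_none (x : List (Option α)) : paddedDFA.evalFrom none x = none := by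
  induction x with
  | nil => rfl
  | cons c x ih => exact ih

lemma paddedDFA_evalFrom_some_true (x : List (Option α)) :
    (paddedDFA.evalFrom (some true) x).isSome ↔ ∀ c ∈ x, c = none := by
  induction x with
  | nil => simp
  | cons c x ih =>
    cases c
    · exact ih.trans (by simp)
    · change (paddedDFA.evalFrom none x).isSome ↔ _
      simp [paddedDFA_evalFrom_none]

lemma paddedDFA_evalFrom_some_false (x : List (Option α)) :
    (paddedDFA.evalFrom (some false) x).isSome ↔ IsPadded x := by
  induction x with
  | nil => simp [IsPadded]
  | cons c x ih =>
    cases c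
    · exact paddedDFA_evalFrom_some_true x
    · exact ih

lemma isRegular_isPadded : Language.IsRegular ({x | IsPadded x} : Language (Option α)) :=
  ⟨Option Bool, inferInstance, paddedDFA, Set.ext paddedDFA_evalFrom_some_false⟩

def dropPad : Option α × Option α → Option (Option α × Option α)
  | (none, none) => none
  | c => some c

lemma filterMap_dropPad_eq_conv (f g : γ → Option α) (x : List γ)
    (hf : IsPadded (x.map f)) (hg : IsPadded (x.map g)) :
    x.filterMap (fun c => dropPad (f c, g c)) = conv (x.filterMap f) (x.filterMap g) := by
  induction x with
  | nil => simp
  | cons c x ih =>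
    have all_none {h : γ → Option α} (hh : ∀ d ∈ x.map h, d = none) : x.filterMap h = [] :=
      List.filterMap_eq_nil_iff.mpr fun d hd => hh _ (List.mem_map_of_mem hd)
    simp only [List.map_cons] at hf hg
    cases hfc : f c <;> cases hgc : g c <;> simp only [hfc, hgc, IsPadded] at hf hg
    · rw [List.filterMap_cons, ih (isPadded_of_forall_eq_none hf) (isPadded_of_forall_eq_none hg)]
      simp [hfc, hgc, dropPad, all_none hf, all_none hg]
    · rw [List.filterMap_cons, ih (isPadded_of_forall_eq_none hf) hg]
      simp [hfc, hgc, dropPad, all_none hf]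
    · rw [List.filterMap_cons, ih hf (isPadded_of_forall_eq_none hg)]
      simp [hfc, hgc, dropPad, all_none hg]
    · rw [List.filterMap_cons, ih hf hg]
      simp [hfc, hgc, dropPad]

lemma exists_padded_tracks (u v w : List α) :
    ∃ x : List (Option α × Option α × Option α),
      IsPadded (x.map (·.1)) ∧ IsPadded (x.map (·.2.1)) ∧ IsPadded (x.map (·.2.2)) ∧
      x.filterMap (·.1) = u ∧ x.filterMap (·.2.1) = v ∧ x.filterMap (·.2.2) = w := by
  let n := max u.length (max v.length w.length)
  let pad (y : List α) : List (Option α) := y.map some ++ List.replicate (n - y.length) none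
  have length_pad (y : List α) (hy : y.length ≤ n) : (pad y).length = n := by
    simp [pad]; omega
  have filterMap_pad (y : List α) : (pad y).filterMap id = y := by simp [pad]
  let x := (pad u).zip ((pad v).zip (pad w))
  have hu : x.map (·.1) = pad u := List.map_fst_zip (by simp [length_pad, n])
  have hvw : x.map (·.2) = (pad v).zip (pad w) := List.map_snd_zip (by simp [length_pad, n])
  have hv : x.map (·.2.1) = pad v := by
    rw [show (fun c : Option α × Option α × Option α => c.2.1) = Prod.fst ∘ Prod.snd from rfl,
      ← List.map_map, hvw]
    exact List.map_fst_zip (by simp [length_pad, n])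
  have hw : x.map (·.2.2) = pad w := by
    rw [show (fun c : Option α × Option α × Option α => c.2.2) = Prod.snd ∘ Prod.snd from rfl,
      ← List.map_map, hvw]
    exact List.map_snd_zip (by simp [length_pad, n])
  refine ⟨x, hu ▸ isPadded_map_some_append _ _, hv ▸ isPadded_map_some_append _ _,
    hw ▸ isPadded_map_some_append _ _, ?_, ?_, ?_⟩
  · rw [← filterMap_pad u, ← hu, List.filterMap_map]; rfl
  · rw [← filterMap_pad v, ← hv, List.filterMap_map]; rfl
  · rw [← filterMap_pad w, ← hw, List.filterMap_map]; rfl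

end Padding

section RegularRelations

variable {α : Type*} [Finite α]

theorem isRegularRel_diag {L : Language α} (hL : L.IsRegular) :
    IsRegularRel {p : List α × List α | p.1 ∈ L ∧ p.2 = p.1} := by
  refine (congrArg Language.IsRegular ?_).mpr (hL.image_map fun a => (some a, some a))
  ext w
  constructor
  · rintro ⟨⟨u, u'⟩, ⟨hu, h : u' = u⟩, rfl⟩
    subst h
    exact ⟨u', hu, (conv_self u').symm⟩
  · rintro ⟨u, hu, rfl⟩
    exact ⟨(u, u), ⟨hu, rfl⟩, (conv_self u).symm⟩

theorem IsRegularRel.inv {R : SetRel (List α) (List α)} (hR : IsRegularRel R) :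
    IsRegularRel R.inv := by
  refine (congrArg Language.IsRegular ?_).mpr (hR.image_map Prod.swap)
  ext w
  constructor
  · rintro ⟨⟨u, v⟩, huv, rfl⟩
    exact ⟨conv v u, ⟨(v, u), huv, rfl⟩, map_swap_conv v u⟩
  · rintro ⟨_, ⟨⟨u, v⟩, huv, rfl⟩, rfl⟩
    exact ⟨(v, u), huv, map_swap_conv u v⟩

/-- The composite is read off padded three-track words whose tracks `(1,2)` and `(2,3)` spell
pairs of `R` and `S`; erasing the middle track gives the convolutions of `R ○ S`. -/
theorem IsRegularRel.comp {R S : SetRel (List α) (List α)} (hR : IsRegularRel R)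
    (hS : IsRegularRel S) : IsRegularRel (R.comp S) := by
  let tr₁ : Option α × Option α × Option α → Option α := (·.1)
  let tr₂ : Option α × Option α × Option α → Option α := (·.2.1)
  let tr₃ : Option α × Option α × Option α → Option α := (·.2.2)
  let twoTracks (f g : Option α × Option α × Option α → Option α) c := dropPad (f c, g c)
  let K : Language (Option α × Option α × Option α) :=
    List.map tr₁ ⁻¹' {x | IsPadded x} ⊓ List.map tr₂ ⁻¹' {x | IsPadded x} ⊓
      List.map tr₃ ⁻¹' {x | IsPadded x} ⊓
      List.filterMap (twoTracks tr₁ tr₂) ⁻¹' {w | ∃ p ∈ R, w = conv p.1 p.2} ⊓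
      List.filterMap (twoTracks tr₂ tr₃) ⁻¹' {w | ∃ p ∈ S, w = conv p.1 p.2}
  have hP := isRegular_isPadded (α := α)
  have hK : K.IsRegular := ((((hP.preimage_map tr₁).inf (hP.preimage_map tr₂)).inf
    (hP.preimage_map tr₃)).inf (hR.preimage_filterMap _)).inf (hS.preimage_filterMap _)
  refine (congrArg Language.IsRegular ?_).mpr (hK.image_filterMap (twoTracks tr₁ tr₃))
  ext w
  constructor
  · rintro ⟨⟨u, w⟩, ⟨v, huv, hvw⟩, rfl⟩
    obtain ⟨x, h₁, h₂, h₃, hu, hv, hw⟩ := exists_padded_tracks u v w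
    refine ⟨x, ⟨⟨⟨⟨h₁, h₂⟩, h₃⟩, ⟨(u, v), huv, ?_⟩⟩, ⟨(v, w), hvw, ?_⟩⟩, ?_⟩
    · exact (filterMap_dropPad_eq_conv tr₁ tr₂ x h₁ h₂).trans (congrArg₂ conv hu hv)
    · exact (filterMap_dropPad_eq_conv tr₂ tr₃ x h₂ h₃).trans (congrArg₂ conv hv hw)
    · exact (filterMap_dropPad_eq_conv tr₁ tr₃ x h₁ h₃).trans (congrArg₂ conv hu hw)
  · rintro ⟨x, ⟨⟨⟨⟨h₁, h₂⟩, h₃⟩, ⟨p, hp, h₁₂⟩⟩, ⟨q, hq, h₂₃⟩⟩, rfl⟩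
    obtain ⟨hp₁, hp₂⟩ := conv_inj.mp ((filterMap_dropPad_eq_conv tr₁ tr₂ x h₁ h₂).symm.trans h₁₂)
    obtain ⟨hq₁, hq₂⟩ := conv_inj.mp ((filterMap_dropPad_eq_conv tr₂ tr₃ x h₂ h₃).symm.trans h₂₃)
    refine ⟨(p.1, q.2), ⟨p.2, hp, by rw [← hp₂, hq₁]; exact hq⟩, ?_⟩
    exact (filterMap_dropPad_eq_conv tr₁ tr₃ x h₁ h₃).trans (congrArg₂ conv hp₁ hq₂)

theorem IsRegularRel.image_prodMap_run {β τ : Type*} [Finite β] [Finite τ] (T : Transducer α β τ)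
    {ℓ : ℕ} (hout : ∀ t a, (T.out t a).length = ℓ) (hfinal : ∀ t, (T.final t).length ≤ ℓ)
    (t₀ : τ) {R : SetRel (List α) (List α)}
    (hR : IsRegularRel R) : IsRegularRel (Prod.map (T.run t₀) (T.run t₀) '' R) := by
  refine (congrArg Language.IsRegular ?_).mpr (T.pair.isRegular_image_run (some t₀, some t₀) hR)
  ext w
  constructor
  · rintro ⟨_, ⟨p, hp, rfl⟩, rfl⟩
    exact ⟨conv p.1 p.2, ⟨p, hp, rfl⟩, T.pair_run_conv hout hfinal _ _ _ _⟩
  · rintro ⟨_, ⟨p, hp, rfl⟩, rfl⟩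
    exact ⟨_, ⟨p, hp, rfl⟩, T.pair_run_conv hout hfinal _ _ _ _⟩

end RegularRelations

section Words

variable {G : Type*} [Group G] {A : Set G}

def Alph.inv (s : Alph A) : Alph A :=
  ⟨s.val⁻¹, s.2.symm.imp (fun h => Set.mem_inv.mp h) fun h => Set.mem_inv.mpr (by rwa [inv_inv])⟩

@[simp] lemma Alph.val_inv (s : Alph A) : s.inv.val = s.val⁻¹ := rfl

lemma finite_alph (hA : A.Finite) : Finite (Alph A) := (hA.union hA.inv).to_subtype

@[simp] lemma eval_nil : eval A [] = 1 := rfl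

@[simp] lemma eval_cons (s : Alph A) (w : List (Alph A)) : eval A (s :: w) = s.val * eval A w :=
  List.prod_cons

@[simp] lemma eval_append (w₁ w₂ : List (Alph A)) :
    eval A (w₁ ++ w₂) = eval A w₁ * eval A w₂ := by
  induction w₁ with
  | nil => simp
  | cons s w ih => simp [ih, mul_assoc]

lemma eval_reverse_map_inv (w : List (Alph A)) :
    eval A (w.map Alph.inv).reverse = (eval A w)⁻¹ := by
  induction w with
  | nil => simp
  | cons s w ih => simp [ih]

lemma exists_eval_eq (hA : Subgroup.closure A = ⊤) (g : G) : ∃ w, eval A w = g := by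
  have hg : g ∈ Subgroup.closure A := hA ▸ Subgroup.mem_top g
  induction hg using Subgroup.closure_induction with
  | mem x hx => exact ⟨[⟨x, Or.inl hx⟩], mul_one x⟩
  | one => exact ⟨[], rfl⟩
  | mul x y _ _ hx hy =>
    obtain ⟨w₁, rfl⟩ := hx
    obtain ⟨w₂, rfl⟩ := hy
    exact ⟨w₁ ++ w₂, eval_append w₁ w₂⟩
  | inv x _ hx =>
    obtain ⟨w, rfl⟩ := hx
    exact ⟨(w.map Alph.inv).reverse, eval_reverse_map_inv w⟩

lemma wordLength_le_length {w : List (Alph A)} {g : G} (hw : eval A w = g) :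
    wordLength A g ≤ w.length := by
  unfold wordLength
  exact Nat.sInf_le ⟨w, hw, rfl⟩

lemma exists_eval_eq_length_eq (hA : Subgroup.closure A = ⊤) (g : G) :
    ∃ w, eval A w = g ∧ w.length = wordLength A g := by
  obtain ⟨w, hw⟩ := exists_eval_eq hA g
  unfold wordLength
  exact Nat.sInf_mem (⟨w.length, w, hw, rfl⟩ :
    Set.Nonempty {n | ∃ w : List (Alph A), eval A w = g ∧ w.length = n})

lemma wordLength_mul_le (hA : Subgroup.closure A = ⊤) (g h : G) :
    wordLength A (g * h) ≤ wordLength A g + wordLength A h := by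
  obtain ⟨w₁, rfl, hw₁⟩ := exists_eval_eq_length_eq hA g
  obtain ⟨w₂, rfl, hw₂⟩ := exists_eval_eq_length_eq hA h
  simpa [← hw₁, ← hw₂] using wordLength_le_length (eval_append w₁ w₂)

theorem exists_wordLength_le_mul {A' : Set G} (hAfin : A.Finite) (hA : Subgroup.closure A = ⊤)
    (hA' : Subgroup.closure A' = ⊤) : ∃ C, 0 < C ∧ ∀ g, wordLength A' g ≤ C * wordLength A g := by
  have := finite_alph hAfin
  obtain ⟨C, hC⟩ := (Set.finite_range fun s : Alph A => wordLength A' s.val).bddAbove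
  have eval_le (w : List (Alph A)) : wordLength A' (eval A w) ≤ (C + 1) * w.length := by
    induction w with
    | nil => simpa using wordLength_le_length (A := A') (w := []) rfl
    | cons s w ih =>
      have hs : wordLength A' s.val ≤ C := hC ⟨s, rfl⟩
      calc wordLength A' (eval A (s :: w))
          ≤ wordLength A' s.val + wordLength A' (eval A w) := wordLength_mul_le hA' _ _
        _ ≤ (C + 1) * (s :: w).length := by simp only [List.length_cons]; nlinarith
  refine ⟨C + 1, C.succ_pos, fun g => ?_⟩
  obtain ⟨w, rfl, hw⟩ := exists_eval_eq_length_eq hA g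
  exact hw ▸ eval_le w

def carryWord (x : Alph A) (b : Bool) : List (Alph A) := if b then [x] else []

lemma exists_length_eq_eval_eq_mul_carry (hA : Subgroup.closure A = ⊤) (x : Alph A) {g : G}
    {m : ℕ} (hm : wordLength A g < m) :
    ∃ (w : List (Alph A)) (b : Bool), w.length = m ∧
      eval A w = g * (eval A (carryWord x b))⁻¹ := by
  have pad (w : List (Alph A)) (k : ℕ) :
      ∃ w', eval A w' = eval A w ∧ w'.length = w.length + 2 * k := by
    induction k with
    | zero => exact ⟨w, rfl, rfl⟩
    | succ k ih =>
      obtain ⟨w', hw', hl⟩ := ih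
      exact ⟨w' ++ [x, x.inv], by simp [hw'], by simp [hl]; ring⟩
  obtain ⟨w₀, rfl, hw₀⟩ := exists_eval_eq_length_eq hA g
  rcases Nat.even_or_odd (m - w₀.length) with ⟨k, hk⟩ | ⟨k, hk⟩
  · obtain ⟨w, hw, hl⟩ := pad w₀ k
    exact ⟨w, false, by omega, by simp [carryWord, hw]⟩
  · obtain ⟨w, hw, hl⟩ := pad (w₀ ++ [x.inv]) k
    exact ⟨w, true, by simp at hl; omega, by simp [carryWord, hw]⟩

theorem exists_pair_ne_of_infinite [Infinite G] (hA : Subgroup.closure A = ⊤) :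
    ∃ x y : Alph A, x ≠ y := by
  by_contra! h
  have : Subsingleton (Alph A) := ⟨h⟩
  have eval_mem (w : List (Alph A)) : eval A w = 1 ∨ ∃ t : Alph A, eval A w = t.val := by
    induction w with
    | nil => exact Or.inl rfl
    | cons s w ih =>
      rcases ih with hw | ⟨t, ht⟩
      · exact Or.inr ⟨s, by rw [eval_cons, hw, mul_one]⟩
      · exact Or.inl (by rw [eval_cons, ht, h t s.inv, Alph.val_inv, mul_inv_cancel])
  refine Set.infinite_univ (((Set.finite_range fun t : Alph A => t.val).insert 1).subset
    fun g _ => ?_)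
  obtain ⟨w, rfl⟩ := exists_eval_eq hA g
  rcases eval_mem w with hw | ⟨t, ht⟩
  · exact Or.inl hw
  · exact Or.inr ⟨t, ht.symm⟩

lemma eval_run {A' : Set G} {τ : Type*} (T : Transducer (Alph A) (Alph A') τ)
    (hT : ∀ t a, eval A' (T.out t a) =
      eval A' (T.final t) * a.val * (eval A' (T.final (T.step t a)))⁻¹)
    (t : τ) (u : List (Alph A)) : eval A' (T.run t u) = eval A' (T.final t) * eval A u := by
  induction u generalizing t with
  | nil => simp
  | cons a u ih => simp [hT, ih, mul_assoc]

end Words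

structure IsRegularEncoding {α β : Type*} (E : List α → List β) : Prop where
  injective : Function.Injective E
  isRegular_image : ∀ L : Language α, L.IsRegular → Language.IsRegular (E '' L : Language β)
  isRegularRel_image :
    ∀ R : SetRel (List α) (List α), IsRegularRel R → IsRegularRel (Prod.map E E '' R)

section Encoding

variable {G : Type*} [Group G] {A A' : Set G}

/-- A block of `code b s` spells `s` up to the carries `x ^ b` in front and `x ^ (next b s)`
behind: the carry absorbs the parity obstruction to spelling every letter by a word of one fixed
length, and the prefix `x ^ i y ^ (n - i)` numbering the letters makes the code injective. -/
theorem exists_blockCode (hAfin : A.Finite) (hA' : Subgroup.closure A' = ⊤) {x y : Alph A'}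
    (hxy : x ≠ y) :
    ∃ (ℓ : ℕ) (code : Bool → Alph A → List (Alph A')) (next : Bool → Alph A → Bool),
      2 ≤ ℓ ∧ (∀ b s, (code b s).length = ℓ) ∧ (∀ b, Function.Injective (code b)) ∧
      ∀ b s, eval A' (code b s) =
        eval A' (carryWord x b) * s.val * (eval A' (carryWord x (next b s)))⁻¹ := by
  classical
  have := finite_alph hAfin
  obtain ⟨n, ⟨e⟩⟩ := Finite.exists_equiv_fin (Alph A)
  let ident (s : Alph A) : List (Alph A') :=
    List.replicate (e s) x ++ List.replicate (n - e s) y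
  have ident_length (s : Alph A) : (ident s).length = n := by simp [ident]
  have ident_injective : Function.Injective ident := fun s s' h => e.injective <| Fin.ext <| by
    simpa [ident, List.count_replicate, hxy.symm] using congrArg (List.count x) h
  let target (b : Bool) (s : Alph A) : G :=
    (eval A' (ident s))⁻¹ * eval A' (carryWord x b) * s.val
  obtain ⟨W, hW⟩ := (Set.finite_range fun p : Bool × Alph A =>
    wordLength A' (target p.1 p.2)).bddAbove
  have hfill (b : Bool) (s : Alph A) := by
    have : wordLength A' (target b s) ≤ W := hW ⟨(b, s), rfl⟩
    exact exists_length_eq_eval_eq_mul_carry hA' x (g := target b s) (m := W + 2) (by omega)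
  choose fill next hfill_length hfill_eval using hfill
  refine ⟨n + (W + 2), fun b s => ident s ++ fill b s, next, by omega, fun b s => ?_,
    fun b s s' h => ident_injective (List.append_inj h (by simp [ident_length])).1,
    fun b s => ?_⟩
  · simp [ident_length, hfill_length]
  · simp only [eval_append, hfill_eval, target]
    group

theorem exists_isRegularEncoding (hAfin : A.Finite) (hA'fin : A'.Finite)
    (hA' : Subgroup.closure A' = ⊤) {x y : Alph A'} (hxy : x ≠ y) :
    ∃ E : List (Alph A) → List (Alph A'), IsRegularEncoding E ∧
      (∀ u, eval A' (E u) = eval A u) ∧ ∀ u, u.length ≤ (E u).length := by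
  have := finite_alph hAfin
  have := finite_alph hA'fin
  obtain ⟨ℓ, code, next, hℓ, hlen, hinj, heval⟩ := exists_blockCode hAfin hA' hxy
  let T : Transducer (Alph A) (Alph A') Bool := ⟨next, code, carryWord x⟩
  have hfinal (b : Bool) : (T.final b).length < ℓ := by
    cases b <;> simp [T, carryWord] <;> omega
  refine ⟨T.run false, ⟨T.run_injective hlen hfinal hinj false,
    fun L hL => T.isRegular_image_run false hL,
    fun R hR => IsRegularRel.image_prodMap_run T hlen (fun b => (hfinal b).le) false hR⟩,
    fun u => by simpa [T, carryWord] using eval_run T heval false u,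
    T.length_le_length_run (fun t a => List.ne_nil_of_length_pos (by simp [T, hlen]; omega))
      false⟩

end Encoding

section MultiplicationRelations

variable {G : Type*} [Group G] {σ : Type*}

/-- The relation `R_g = {(ψ⁻¹ h, ψ⁻¹ (h g))}` of a representation `ψ : L → G`. -/
def multRel (L : Language σ) (ψ : List σ → G) (g : G) : SetRel (List σ) (List σ) :=
  {p | p.1 ∈ L ∧ p.2 ∈ L ∧ ψ p.2 = ψ p.1 * g}

variable {L : Language σ} {ψ : List σ → G}

lemma multRel_one (hψ : Set.InjOn ψ L) : multRel L ψ 1 = {p | p.1 ∈ L ∧ p.2 = p.1} := by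
  ext ⟨u, v⟩
  simp only [multRel, mul_one, Set.mem_ofPred_eq]
  exact ⟨fun ⟨hu, hv, h⟩ => ⟨hu, hψ hv hu h⟩, fun ⟨hu, h⟩ => ⟨hu, h ▸ hu, h ▸ rfl⟩⟩

lemma multRel_mul (hψ : Set.SurjOn ψ L Set.univ) (g h : G) :
    multRel L ψ (g * h) = (multRel L ψ g).comp (multRel L ψ h) := by
  ext ⟨u, w⟩
  simp only [multRel, SetRel.mem_comp, Set.mem_ofPred_eq]
  constructor
  · rintro ⟨hu, hw, huw⟩
    obtain ⟨v, hv, hψv⟩ := hψ (Set.mem_univ (ψ u * g))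
    exact ⟨v, ⟨hu, hv, hψv⟩, hv, hw, by rw [huw, hψv, mul_assoc]⟩
  · rintro ⟨v, ⟨hu, hv, huv⟩, -, hw, hvw⟩
    exact ⟨hu, hw, by rw [hvw, huv, mul_assoc]⟩

lemma multRel_inv (g : G) : multRel L ψ g⁻¹ = (multRel L ψ g).inv := by
  ext ⟨u, v⟩
  simp only [multRel, SetRel.mem_inv, Set.mem_ofPred_eq]
  exact ⟨fun ⟨hu, hv, h⟩ => ⟨hv, hu, by rw [h, inv_mul_cancel_right]⟩,
    fun ⟨hv, hu, h⟩ => ⟨hu, hv, by rw [h, mul_inv_cancel_right]⟩⟩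

lemma multRel_image {τ : Type*} {E : List σ → List τ} (hE : Function.Injective E) (g : G) :
    multRel (E '' L) (ψ ∘ Function.invFun E) g = Prod.map E E '' multRel L ψ g := by
  have hψE (u : List σ) : (ψ ∘ Function.invFun E) (E u) = ψ u :=
    congrArg ψ (Function.leftInverse_invFun hE u)
  ext ⟨u', v'⟩
  constructor
  · rintro ⟨⟨u, hu, rfl⟩, ⟨v, hv, rfl⟩, h⟩
    exact ⟨(u, v), ⟨hu, hv, by simpa only [hψE] using h⟩, rfl⟩
  · rintro ⟨⟨u, v⟩, ⟨hu, hv, h⟩, hp⟩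
    obtain ⟨rfl, rfl⟩ := Prod.ext_iff.mp hp
    exact ⟨⟨u, hu, rfl⟩, ⟨v, hv, rfl⟩, by simpa only [Prod.map, hψE] using h⟩

end MultiplicationRelations

section CayleyAutomatic

variable {G : Type*} [Group G] {A A' : Set G} {L : Language (Alph A)} {ψ : List (Alph A) → G}

theorem IsCayleyAutomaticRep.isRegularRel_multRel [Finite (Alph A)]
    (hA : Subgroup.closure A = ⊤) (h : IsCayleyAutomaticRep A L ψ) (g : G) :
    IsRegularRel (multRel L ψ g) := by
  obtain ⟨hL, hψ, hgen⟩ := h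
  have hg : g ∈ Subgroup.closure A := hA ▸ Subgroup.mem_top g
  induction hg using Subgroup.closure_induction with
  | mem a ha => exact hgen a ha
  | one => exact multRel_one hψ.injOn ▸ isRegularRel_diag hL
  | mul g h _ _ hg hh => exact multRel_mul hψ.surjOn g h ▸ hg.comp hh
  | inv g _ hg => exact multRel_inv g ▸ hg.inv

theorem IsCayleyAutomaticRep.image [Finite (Alph A)] (hA : Subgroup.closure A = ⊤)
    (h : IsCayleyAutomaticRep A L ψ) {E : List (Alph A) → List (Alph A')}
    (hE : IsRegularEncoding E) : IsCayleyAutomaticRep A' (E '' L) (ψ ∘ Function.invFun E) := by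
  refine ⟨hE.isRegular_image L h.1, ⟨fun _ _ => trivial, ?_, ?_⟩, fun a _ => ?_⟩
  · rintro _ ⟨u, hu, rfl⟩ _ ⟨v, hv, rfl⟩ huv
    simp only [Function.comp_apply, Function.leftInverse_invFun hE.injective _] at huv
    rw [h.2.1.injOn hu hv huv]
  · intro g _
    obtain ⟨u, hu, rfl⟩ := h.2.1.surjOn (Set.mem_univ g)
    exact ⟨E u, ⟨u, hu, rfl⟩, by simp [Function.leftInverse_invFun hE.injective _]⟩
  · change IsRegularRel (multRel (E '' L) (ψ ∘ Function.invFun E) a)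
    rw [multRel_image hE.injective a]
    exact hE.isRegularRel_image _ (h.isRegularRel_multRel hA a)

end CayleyAutomatic

end CAG

open CAG in
/-- Membership in the class `ℬ_f` does not depend on the choice of finite generating set:
if a finitely generated infinite Cayley automatic group `G` belongs to `ℬ_f` with respect to a
finite generating set `A`, then it belongs to `ℬ_f` with respect to any other finite
generating set `A'`. -/
theorem classB_independent_of_generating_set
    (G : Type*) [Group G] [Infinite G] (f : FFun)
    (A A' : Set G) (hAfin : A.Finite) (hA'fin : A'.Finite)
    (hAgen : Subgroup.closure A = ⊤) (hA'gen : Subgroup.closure A' = ⊤)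
    (h : InB A f) : InB A' f := by
  obtain ⟨L, ψ, hrep, K, M, N, hK, hM, hN, hQN, hbound⟩ := h
  have := finite_alph hAfin
  obtain ⟨x, y, hxy⟩ := exists_pair_ne_of_infinite hA'gen
  obtain ⟨E, hE, heval, hlen⟩ := exists_isRegularEncoding hAfin hA'fin hA'gen hxy
  obtain ⟨C, hC, hCA⟩ := exists_wordLength_le_mul hAfin hAgen hA'gen
  refine ⟨E '' L, ψ ∘ Function.invFun E, hrep.image hAgen hE, C * K, M, N, Nat.mul_pos hC hK,
    hM, hN, hQN, ?_⟩
  rintro n hn _ ⟨u, hu, rfl⟩ hun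
  have hψ : (ψ ∘ Function.invFun E) (E u) = ψ u :=
    congrArg ψ (Function.leftInverse_invFun hE.injective u)
  calc (cayleyDist A' (eval A' (E u)) ((ψ ∘ Function.invFun E) (E u)) : ℝ)
      = wordLength A' ((eval A u)⁻¹ * ψ u) := by rw [cayleyDist, heval, hψ]
    _ ≤ C * cayleyDist A (eval A u) (ψ u) := by exact_mod_cast hCA _
    _ ≤ C * (K * f.toFun (M * n)) := by gcongr; exact hbound n hn u hu ((hlen u).trans hun)
    _ = (C * K : ℕ) * f.toFun (M * n) := by push_cast; ring
end

section
/- In the Baumslag–Solitar group BS(p,q) = ⟨a, t | t a^p t⁻¹ = a^q⟩ with 1 ≤ p ≤ q, every element g can be written uniquely as g = w̃(a,t)·a^k, where w̃(a,t) is a product of letters from the set {t, at, a²t, …, a^{q−1}t, t⁻¹, at⁻¹, …, a^{p−1}t⁻¹} whose corresponding word in a and t is freely reduced, and k ∈ ℤ. -/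
namespace CAG

/-- The defining relation of the Baumslag–Solitar group `BS(p,q) = ⟨a,t | t aᵖ t⁻¹ = a^q⟩`,
with `a` the generator `0` and `t` the generator `1` of the free group on two generators. -/
def BSRels (p q : ℕ) : Set (FreeGroup (Fin 2)) :=
  {FreeGroup.of 1 * FreeGroup.of 0 ^ p * (FreeGroup.of 1)⁻¹ * (FreeGroup.of 0 ^ q)⁻¹}

/-- The Baumslag–Solitar group `BS(p,q) = ⟨a,t | t aᵖ t⁻¹ = a^q⟩`. -/
abbrev BS (p q : ℕ) := PresentedGroup (BSRels p q)

/-- The generator `a` of `BS(p,q)`. -/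
def BS.a (p q : ℕ) : BS p q := PresentedGroup.of 0

/-- The generator `t` of `BS(p,q)`. -/
def BS.t (p q : ℕ) : BS p q := PresentedGroup.of 1

/-- The alphabet of blocks `{t, at, …, a^{q-1}t, t⁻¹, at⁻¹, …, a^{p-1}t⁻¹}`:
`.inl i` stands for `aⁱt` (`0 ≤ i < q`) and `.inr j` stands for `aʲt⁻¹` (`0 ≤ j < p`). -/
abbrev BSBlock (p q : ℕ) := Fin q ⊕ Fin p

/-- The word in the letters `a, t` (elements of `Fin 2 × Bool`, the letter `(x, b)` standing
for `x` if `b = true` and `x⁻¹` if `b = false`) spelled by a single block. -/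
def BSBlock.letters {p q : ℕ} : BSBlock p q → List (Fin 2 × Bool)
  | .inl i => List.replicate i.val ((0 : Fin 2), true) ++ [((1 : Fin 2), true)]
  | .inr j => List.replicate j.val ((0 : Fin 2), true) ++ [((1 : Fin 2), false)]

/-- The word in the letters `a, t` spelled by a sequence of blocks. -/
def BSBlockWord {p q : ℕ} (bs : List (BSBlock p q)) : List (Fin 2 × Bool) :=
  (bs.map BSBlock.letters).flatten

/-- A sequence of blocks is freely reduced if the word in `a, t` it spells is freely
reduced, i.e. it contains no subword `x x⁻¹` or `x⁻¹ x`. -/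
def BSFreelyReduced {p q : ℕ} (bs : List (BSBlock p q)) : Prop :=
  FreeGroup.reduce (BSBlockWord bs) = BSBlockWord bs

/-- The element of `BS(p,q)` represented by a single block. -/
def BSBlock.elem {p q : ℕ} : BSBlock p q → BS p q
  | .inl i => BS.a p q ^ i.val * BS.t p q
  | .inr j => BS.a p q ^ j.val * (BS.t p q)⁻¹

end CAG

theorem List.isChain_concat {α : Type*} {R : α → α → Prop} {l : List α} {b : α} :
    (l ++ [b]).IsChain R ↔ l.IsChain R ∧ ∀ x ∈ l.getLast?, R x b := by
  simp [List.isChain_append]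

namespace CAG

section Blocks

variable {n m : ℕ}

def BlockAdj : Fin n ⊕ Fin m → Fin n ⊕ Fin m → Prop
  | .inl _, .inr j => j.val ≠ 0
  | .inr _, .inl i => i.val ≠ 0
  | _, _ => True

theorem blockAdj_swap {b b' : Fin n ⊕ Fin m} : BlockAdj b.swap b'.swap ↔ BlockAdj b b' := by
  cases b <;> cases b' <;> rfl

theorem isChain_map_swap {w : List (Fin n ⊕ Fin m)} :
    (w.map Sum.swap).IsChain BlockAdj ↔ w.IsChain BlockAdj := by
  simp only [List.isChain_map, blockAdj_swap]

def swapBlocks (x : List (Fin n ⊕ Fin m) × ℤ) : List (Fin m ⊕ Fin n) × ℤ :=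
  (x.1.map Sum.swap, x.2)

@[simp]
theorem swapBlocks_swapBlocks (x : List (Fin n ⊕ Fin m) × ℤ) :
    swapBlocks (swapBlocks x) = x := by
  simp [swapBlocks, Function.comp_def]

variable [NeZero n]

def residue (k : ℤ) : Fin n :=
  ⟨(k % n).toNat, by
    have := Int.emod_lt_of_pos k (Int.natCast_pos.2 (NeZero.pos n)); have := NeZero.pos n; omega⟩

theorem residue_mul_add (c : ℤ) (r : Fin n) : residue (n * c + r) = r := by
  ext
  simp [residue, Int.emod_eq_of_lt]

theorem mul_add_ediv (c : ℤ) (r : Fin n) : (n * c + r) / (n : ℤ) = c := by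
  rw [add_comm, Int.add_mul_ediv_left _ _ (by exact_mod_cast NeZero.ne n),
    Int.ediv_eq_zero_of_lt (by positivity) (by exact_mod_cast r.2), zero_add]

theorem mul_ediv_add_residue (k : ℤ) : n * (k / n) + (residue k : Fin n) = k := by
  have := Int.emod_nonneg k (by exact_mod_cast NeZero.ne n : (n : ℤ) ≠ 0)
  simp only [residue, Int.toNat_of_nonneg this]
  exact Int.mul_ediv_add_emod k n

/-- Right multiplication of `w · aᵏ` by `t` in `BS(m,n)`: with `k = n c + r`, `0 ≤ r < n`, we have
`aᵏ t = aʳ t a^{mc}`, and `aʳ t` is appended as a new block unless it cancels a final block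
`aʲ t⁻¹` (when `r = 0`). -/
def mulT (x : List (Fin n ⊕ Fin m) × ℤ) : List (Fin n ⊕ Fin m) × ℤ :=
  match x.1.getLast?, (residue (n := n) x.2).val with
  | some (.inr j), 0 => (x.1.dropLast, j + m * (x.2 / n))
  | _, _ => (x.1 ++ [.inl (residue x.2)], m * (x.2 / n))

theorem mulT_pop (w : List (Fin n ⊕ Fin m)) (j : Fin m) (c : ℤ) :
    mulT (w ++ [.inr j], n * c) = (w, j + m * c) := by
  have h := residue_mul_add (n := n) c 0
  have h' := mul_add_ediv (n := n) c 0
  simp only [Fin.val_zero, Nat.cast_zero, add_zero] at h h'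
  simp [mulT, h, h']

theorem mulT_append {w : List (Fin n ⊕ Fin m)} {r : Fin n}
    (hr : ∀ b ∈ w.getLast?, BlockAdj b (.inl r)) (c : ℤ) :
    mulT (w, n * c + r) = (w ++ [.inl r], m * c) := by
  unfold mulT
  split
  · rename_i j hj h0
    rw [residue_mul_add] at h0
    exact absurd h0 (hr _ hj)
  · rw [residue_mul_add, mul_add_ediv]

theorem mulT_induction {P : List (Fin n ⊕ Fin m) × ℤ → List (Fin n ⊕ Fin m) × ℤ → Prop}
    (pop : ∀ w (j : Fin m) c, P (w ++ [.inr j], n * c) (w, j + m * c))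
    (append : ∀ w (r : Fin n) c, (∀ b ∈ w.getLast?, BlockAdj b (.inl r)) →
      P (w, n * c + r) (w ++ [.inl r], m * c))
    (x : List (Fin n ⊕ Fin m) × ℤ) : P x (mulT x) := by
  obtain ⟨w, k⟩ := x
  rw [← mul_ediv_add_residue (n := n) k]
  by_cases hr : ∀ b ∈ w.getLast?, BlockAdj b (.inl (residue k))
  · rw [mulT_append hr]
    exact append _ _ _ hr
  · obtain ⟨b, hb, hbr⟩ := not_forall₂.1 hr
    obtain ⟨j, rfl⟩ : ∃ j, b = .inr j := by cases b <;> simp_all [BlockAdj]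
    obtain ⟨w, rfl⟩ := List.getLast?_eq_some_iff.1 hb
    have h0 : residue (n := n) k = 0 := Fin.ext (not_not.1 hbr)
    rw [h0, Fin.val_zero, Nat.cast_zero, add_zero, mulT_pop]
    exact pop _ _ _

theorem isChain_mulT {x : List (Fin n ⊕ Fin m) × ℤ} (hx : x.1.IsChain BlockAdj) :
    (mulT x).1.IsChain BlockAdj := by
  induction x using mulT_induction with
  | pop w j c => exact hx.left_of_append
  | append w r c hr => exact List.isChain_concat.2 ⟨hx, hr⟩

theorem mulT_add (x : List (Fin n ⊕ Fin m) × ℤ) :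
    mulT (x.1, x.2 + n) = ((mulT x).1, (mulT x).2 + m) := by
  induction x using mulT_induction with
  | pop w j c =>
    rw [show (n : ℤ) * c + n = n * (c + 1) by ring, mulT_pop]
    simp only [Prod.mk.injEq, true_and]; ring
  | append w r c hr =>
    rw [show (n : ℤ) * c + r + n = n * (c + 1) + r by ring, mulT_append hr]
    simp only [Prod.mk.injEq, true_and]; ring

theorem swapBlocks_mulT_swapBlocks_mulT [NeZero m] {x : List (Fin n ⊕ Fin m) × ℤ}
    (hx : x.1.IsChain BlockAdj) : swapBlocks (mulT (swapBlocks (mulT x))) = x := by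
  induction x using mulT_induction with
  | pop w j c =>
    have hj : ∀ b ∈ (w.map Sum.swap).getLast?, BlockAdj b (.inl j) :=
      (List.isChain_concat.1 (by simpa using isChain_map_swap.2 hx)).2
    have hswap : swapBlocks (w, j + m * c) = (w.map Sum.swap, m * c + j) := by
      rw [swapBlocks, add_comm]
    rw [hswap, mulT_append hj]
    simp [swapBlocks, Function.comp_def]
  | append w r c _ =>
    simp only [swapBlocks, List.map_append, List.map_cons, List.map_nil, Sum.swap_inl, mulT_pop]
    simp [Function.comp_def, add_comm]

end Blocks

namespace BS

variable (p q : ℕ)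

theorem t_mul_a_pow_mul_t_inv : t p q * a p q ^ p * (t p q)⁻¹ = a p q ^ q := by
  refine mul_inv_eq_one.1 ?_
  have := PresentedGroup.one_of_mem (rels := BSRels p q) rfl
  simpa [a, t, PresentedGroup.of, mul_assoc] using this

theorem a_zpow_mul_t (c : ℤ) : a p q ^ ((q : ℤ) * c) * t p q = t p q * a p q ^ ((p : ℤ) * c) := by
  rw [zpow_mul, zpow_mul, zpow_natCast, zpow_natCast, ← t_mul_a_pow_mul_t_inv, conj_zpow]
  group

end BS

variable {p q : ℕ}

def evalPair (x : List (BSBlock p q) × ℤ) : BS p q :=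
  (x.1.map BSBlock.elem).prod * BS.a p q ^ x.2

theorem evalPair_mulT [NeZero q] (x : List (BSBlock p q) × ℤ) :
    evalPair (mulT x) = evalPair x * BS.t p q := by
  induction x using mulT_induction with
  | pop w j c =>
    simp only [evalPair, List.map_append, List.map_cons, List.map_nil, List.prod_append,
      List.prod_cons, List.prod_nil, mul_one, BSBlock.elem, zpow_add, zpow_natCast]
    simp only [mul_assoc, BS.a_zpow_mul_t, inv_mul_cancel_left]
  | append w r c _ =>
    simp only [evalPair, List.map_append, List.map_cons, List.map_nil, List.prod_append,
      List.prod_cons, List.prod_nil, mul_one, BSBlock.elem, add_comm _ (r : ℤ), zpow_add,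
      zpow_natCast]
    simp only [mul_assoc, BS.a_zpow_mul_t]

variable (p q) in
abbrev NF : Type := {x : List (BSBlock p q) × ℤ // x.1.IsChain BlockAdj}

namespace NF

def eval (x : NF p q) : BS p q := evalPair x.1

def mulA : Equiv.Perm (NF p q) where
  toFun x := ⟨(x.1.1, x.1.2 + 1), x.2⟩
  invFun x := ⟨(x.1.1, x.1.2 - 1), x.2⟩
  left_inv x := by simp
  right_inv x := by simp

theorem mulA_zpow_apply (k : ℤ) (x : NF p q) :
    (mulA ^ k) x = ⟨(x.1.1, x.1.2 + k), x.2⟩ := by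
  revert x
  induction k using Int.induction_on with
  | zero => simp
  | succ k ih =>
    intro x
    rw [zpow_add_one, Equiv.Perm.mul_apply, ih]
    simp only [mulA, Equiv.coe_fn_mk, Subtype.mk.injEq, Prod.mk.injEq, true_and]
    ring
  | pred k ih =>
    intro x
    rw [zpow_sub_one, Equiv.Perm.mul_apply, ih, Equiv.Perm.inv_def]
    simp only [mulA, Equiv.coe_fn_symm_mk, Subtype.mk.injEq, Prod.mk.injEq, true_and]
    ring

variable [NeZero p] [NeZero q]

/-- Right multiplication by `t⁻¹` is right multiplication by `t` in `BS(q,p)`, read through the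
swap of the two kinds of blocks. -/
def mulT : Equiv.Perm (NF p q) where
  toFun x := ⟨CAG.mulT x.1, isChain_mulT x.2⟩
  invFun x := ⟨swapBlocks (CAG.mulT (swapBlocks x.1)),
    isChain_map_swap.2 (isChain_mulT (x := swapBlocks x.1) (isChain_map_swap.2 x.2))⟩
  left_inv x := Subtype.ext (swapBlocks_mulT_swapBlocks_mulT x.2)
  right_inv x := Subtype.ext <| by
    simpa using congrArg swapBlocks
      (swapBlocks_mulT_swapBlocks_mulT (x := swapBlocks x.1) (isChain_map_swap.2 x.2))

@[simp]
theorem val_mulT (x : NF p q) : (mulT x).1 = CAG.mulT x.1 := rfl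

@[simp]
theorem val_mulT_symm (x : NF p q) : (mulT.symm x).1 = swapBlocks (CAG.mulT (swapBlocks x.1)) :=
  rfl

theorem mulA_pow_mul_mulT : (mulA ^ p * mulT : Equiv.Perm (NF p q)) = mulT * mulA ^ q := by
  refine Equiv.ext fun x => Subtype.ext ?_
  simp only [Equiv.Perm.mul_apply, ← zpow_natCast, mulA_zpow_apply, val_mulT]
  exact (mulT_add x.1).symm

def rightAction : BS p q →* (Equiv.Perm (NF p q))ᵐᵒᵖ :=
  PresentedGroup.toGroup (f := ![.op mulA, .op mulT]) <| by
    rintro _ rfl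
    apply MulOpposite.unop_injective
    simp [mul_assoc, mulA_pow_mul_mulT]

def act (g : BS p q) (x : NF p q) : NF p q := (rightAction g).unop x

theorem act_one (x : NF p q) : act 1 x = x := by
  simp [act]

theorem act_mul (g h : BS p q) (x : NF p q) : act (g * h) x = act h (act g x) := by
  simp [act]

theorem act_a_zpow (k : ℤ) (x : NF p q) : act (BS.a p q ^ k) x = ⟨(x.1.1, x.1.2 + k), x.2⟩ := by
  simp [act, rightAction, BS.a, mulA_zpow_apply]

theorem act_t (x : NF p q) : act (BS.t p q) x = mulT x := by
  simp [act, rightAction, BS.t]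

theorem act_t_inv (x : NF p q) : act (BS.t p q)⁻¹ x = mulT.symm x := by
  simp [act, rightAction, BS.t, Equiv.Perm.inv_def]

theorem eval_act (g : BS p q) (x : NF p q) : eval (act g x) = eval x * g := by
  have hg : g ∈ Subgroup.closure (Set.range PresentedGroup.of) := by simp
  induction hg using Subgroup.closure_induction generalizing x with
  | mem _ hg =>
    obtain ⟨i, rfl⟩ := hg
    fin_cases i
    · show eval (act (BS.a p q) x) = eval x * BS.a p q
      rw [← zpow_one (BS.a p q), act_a_zpow]
      simp only [eval, evalPair, zpow_add, mul_assoc]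
    · exact evalPair_mulT x.1
  | one => rw [act_one, mul_one]
  | mul g h _ _ hg hh => rw [act_mul, hh, hg, mul_assoc]
  | inv g _ hg =>
    rw [eq_mul_inv_iff_mul_eq, ← hg, ← act_mul, inv_mul_cancel, act_one]

theorem act_elem {w : List (BSBlock p q)} {b : BSBlock p q} (h : (w ++ [b]).IsChain BlockAdj) :
    act b.elem ⟨(w, 0), h.left_of_append⟩ = ⟨(w ++ [b], 0), h⟩ := by
  cases b with
  | inl i =>
    have hi := (List.isChain_concat.1 h).2
    simp only [BSBlock.elem, act_mul, ← zpow_natCast, act_a_zpow, act_t, zero_add]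
    apply Subtype.ext
    simpa using mulT_append hi 0
  | inr j =>
    have hj : ∀ b ∈ (w.map Sum.swap).getLast?, BlockAdj b (.inl j) :=
      (List.isChain_concat.1 (by simpa using isChain_map_swap.2 h)).2
    simp only [BSBlock.elem, act_mul, ← zpow_natCast, act_a_zpow, act_t_inv, zero_add]
    apply Subtype.ext
    have := mulT_append hj 0
    simp only [mul_zero, zero_add] at this
    simp [swapBlocks, this, Function.comp_def]

variable (p q) in
def base : NF p q := ⟨([], 0), List.isChain_nil⟩

theorem act_eval_base (x : NF p q) : act (eval x) (base p q) = x := by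
  suffices h : ∀ w (hw : w.IsChain BlockAdj), act (evalPair (w, 0)) (base p q) = ⟨(w, 0), hw⟩ by
    obtain ⟨⟨w, k⟩, hw⟩ := x
    have hsplit : evalPair (w, k) = evalPair (w, 0) * BS.a p q ^ k := by simp [evalPair]
    simp only [eval, hsplit, act_mul, h w hw, act_a_zpow, zero_add]
  intro w
  induction w using List.reverseRecOn with
  | nil => intro _; simp [evalPair, act_one, base]
  | append_singleton w b ih =>
    intro hw
    have hsplit : evalPair (w ++ [b], 0) = evalPair (w, 0) * b.elem := by simp [evalPair]
    rw [hsplit, act_mul, ih hw.left_of_append, act_elem hw]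

theorem eval_bijective : Function.Bijective (eval : NF p q → BS p q) := by
  refine Function.bijective_iff_has_inverse.2
    ⟨fun g => act g (base p q), act_eval_base, fun g => ?_⟩
  rw [eval_act]
  simp [base, eval, evalPair]

end NF

theorem isReduced_letters (b : BSBlock p q) : FreeGroup.IsReduced b.letters := by
  cases b <;>
  · refine (List.isChain_replicate_of_rel _ (by simp)).append (.singleton _) ?_
    simp [List.getLast?_replicate]

theorem letters_junction_iff (b b' : BSBlock p q) :
    (∀ x ∈ b.letters.getLast?, ∀ y ∈ b'.letters.head?, x.1 = y.1 → x.2 = y.2) ↔ BlockAdj b b' := by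
  rcases b with _ | _ <;> rcases b' with ⟨_ | k, hk⟩ | ⟨_ | k, hk⟩ <;>
    simp [BSBlock.letters, BlockAdj, List.replicate_succ]

theorem bsFreelyReduced_iff (bs : List (BSBlock p q)) :
    BSFreelyReduced bs ↔ bs.IsChain BlockAdj := by
  rw [BSFreelyReduced, ← FreeGroup.isReduced_iff_reduce_eq, FreeGroup.IsReduced, BSBlockWord,
    List.isChain_flatten (by simp [BSBlock.letters]), List.isChain_map]
  simp only [List.forall_mem_map, letters_junction_iff]
  exact and_iff_right fun b _ => isReduced_letters b

end CAG

open CAG in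
/-- Normal form in the Baumslag–Solitar group `BS(p,q)`, `1 ≤ p ≤ q`: every element `g`
can be written uniquely as `g = w̃(a,t)·aᵏ`, where `w̃(a,t)` is a freely reduced word over the
alphabet of blocks `{t, at, …, a^{q-1}t, t⁻¹, at⁻¹, …, a^{p-1}t⁻¹}` and `k ∈ ℤ`. -/
theorem BS_normal_form (p q : ℕ) (hp : 1 ≤ p) (hpq : p ≤ q) (g : BS p q) :
    ∃! bk : List (BSBlock p q) × ℤ,
      BSFreelyReduced bk.1 ∧ g = (bk.1.map BSBlock.elem).prod * BS.a p q ^ bk.2 := by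
  have : NeZero p := ⟨by omega⟩
  have : NeZero q := ⟨by omega⟩
  obtain ⟨⟨x, hx⟩, rfl⟩ := NF.eval_bijective.2 g
  refine ⟨x, ⟨(bsFreelyReduced_iff _).2 hx, rfl⟩, fun y ⟨hy, hxy⟩ => ?_⟩
  exact congrArg Subtype.val <| NF.eval_bijective.1
    (a₁ := ⟨y, (bsFreelyReduced_iff _).1 hy⟩) (a₂ := ⟨x, hx⟩) hxy.symm
end
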